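/- There exists a flat nil-semiring that has a unique annihilator but is not subdirectly irreducible. -/
import Mathlib


universe u

-- The flat addition determined by a zero element: `a + b = a` if `a = b`, else `0`.
open Classical in
noncomputable def fAdd {S : Type u} (zero : S) (a b : S) : S :=
  if a = b then a else zero

-- A congruence of the flat semiring `(S, fAdd zero, mul)`: an equivalence relation
-- compatible with both the (flat) addition and the multiplication.
def IsCongr {S : Type u} (mul : S → S → S) (zero : S) (r : S → S → Prop) : Prop :=
  Equivalence r ∧
    (∀ a b c d : S, r a b → r c d → r (fAdd zero a c) (fAdd zero b d)) ∧
    (∀ a b c d : S, r a b → r c d → r (mul a c) (mul b d))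

-- Subdirect irreducibility: the congruences different from equality have a least
-- element with respect to inclusion.
def SubdirectlyIrred {S : Type u} (mul : S → S → S) (zero : S) : Prop :=
  ∃ m : S → S → Prop,
    (IsCongr mul zero m ∧ m ≠ (fun a b => a = b)) ∧
    ∀ r : S → S → Prop, IsCongr mul zero r → r ≠ (fun a b => a = b) →
      ∀ a b : S, m a b → r a b

-- `(S, mul, zero)` is a flat semiring: `mul` is associative, `zero` is a (multiplicative)
-- zero element, and `mul` is 0-cancellative.
def IsFlat {S : Type u} (mul : S → S → S) (zero : S) : Prop :=
  (∀ a b c : S, mul (mul a b) c = mul a (mul b c)) ∧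
  (∀ a : S, mul zero a = zero ∧ mul a zero = zero) ∧
  (∀ a b c : S, mul a b = mul a c → mul a b ≠ zero → b = c) ∧
  (∀ a b c : S, mul b a = mul c a → mul b a ≠ zero → b = c)

-- `spow mul a n = a^(n+1)`.
def spow {S : Type u} (mul : S → S → S) (a : S) : ℕ → S
  | 0 => a
  | n + 1 => mul (spow mul a n) a

-- Every element has a power (with exponent `n ≥ 1`) equal to zero.
def IsNil {S : Type u} (mul : S → S → S) (zero : S) : Prop :=
  ∀ a : S, ∃ n : ℕ, 1 ≤ n ∧ spow mul a (n - 1) = zero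

-- `w` is an annihilator: a nonzero element whose product with anything is zero.
def IsAnnihilator {S : Type u} (mul : S → S → S) (zero : S) (w : S) : Prop :=
  w ≠ zero ∧ ∀ s : S, mul w s = zero ∧ mul s w = zero

-- `w ∈ S¹aS¹ = {a} ∪ aS ∪ Sa ∪ SaS`.
def memS1aS1 {S : Type u} (mul : S → S → S) (a w : S) : Prop :=
  w = a ∨ (∃ s, w = mul a s) ∨ (∃ s, w = mul s a) ∨ (∃ s t, w = mul (mul s a) t)

inductive W : Type where
  | z : W
  | om : W
  | p : ℕ → ℕ → W
deriving DecidableEq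

def wmul : W → W → W
  | W.p a l, W.p c m => if c = a + l + 1 then W.p a (l + m + 1) else W.z
  | _, _ => W.z

@[simp] lemma wmul_z_left (x : W) : wmul W.z x = W.z := by cases x <;> rfl
@[simp] lemma wmul_z_right (x : W) : wmul x W.z = W.z := by cases x <;> rfl
@[simp] lemma wmul_om_left (x : W) : wmul W.om x = W.z := by cases x <;> rfl
@[simp] lemma wmul_om_right (x : W) : wmul x W.om = W.z := by cases x <;> rfl
@[simp] lemma wmul_p_p (a l c m : ℕ) :
    wmul (W.p a l) (W.p c m) = if c = a + l + 1 then W.p a (l + m + 1) else W.z := rfl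

lemma wmul_assoc (a b c : W) : wmul (wmul a b) c = wmul a (wmul b c) := by
  cases a <;> cases b <;> cases c <;> simp
  case p.p.p a l c m e n =>
    by_cases h1 : c = a + l + 1 <;> by_cases h2 : e = c + m + 1 <;>
      simp [h1, h2] <;> split_ifs <;> simp_all <;> omega

lemma congr_of_ideal (J : W → Prop) (h0 : J W.z)
    (hcl : ∀ s t, J s → J (wmul s t) ∧ J (wmul t s)) :
    IsCongr wmul W.z (fun a b => a = b ∨ (J a ∧ J b)) := by
  refine ⟨⟨fun a => Or.inl rfl, ?_, ?_⟩, ?_, ?_⟩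
  · rintro a b (rfl | ⟨ha, hb⟩); · exact Or.inl rfl
    · exact Or.inr ⟨hb, ha⟩
  · rintro a b c (rfl | ⟨ha, hb⟩) (rfl | ⟨hb', hc⟩)
    · exact Or.inl rfl
    · exact Or.inr ⟨hb', hc⟩
    · exact Or.inr ⟨ha, hb⟩
    · exact Or.inr ⟨ha, hc⟩
  · rintro a b c d (rfl | ⟨ha, hb⟩) (rfl | ⟨hc, hd⟩)
    · exact Or.inl rfl
    · refine Or.inr ⟨?_, ?_⟩ <;> unfold fAdd <;> split_ifs with h
      · exact h ▸ hc
      · exact h0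
      · exact h ▸ hd
      · exact h0
    · refine Or.inr ⟨?_, ?_⟩ <;> unfold fAdd <;> split_ifs with h
      · exact ha
      · exact h0
      · exact hb
      · exact h0
    · refine Or.inr ⟨?_, ?_⟩ <;> unfold fAdd <;> split_ifs with h
      · exact ha
      · exact h0
      · exact hb
      · exact h0
  · rintro a b c d (rfl | ⟨ha, hb⟩) (rfl | ⟨hc, hd⟩)
    · exact Or.inl rfl
    · exact Or.inr ⟨(hcl c a hc).2, (hcl d a hd).2⟩
    · exact Or.inr ⟨(hcl a c ha).1, (hcl b c hb).1⟩
    · exact Or.inr ⟨(hcl a c ha).1, (hcl b d hb).1⟩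

/-- There exists a flat nil-semiring that has a unique annihilator but
is not subdirectly irreducible. -/
theorem stmt_6 :
    ∃ (S : Type) (mul : S → S → S) (zero : S),
      IsFlat mul zero ∧ IsNil mul zero ∧
      (∃! w : S, IsAnnihilator mul zero w) ∧
      ¬ SubdirectlyIrred mul zero := by
  refine ⟨W, wmul, W.z, ⟨wmul_assoc, fun a => ⟨by simp, by simp⟩, ?_, ?_⟩, ?_, ?_, ?_⟩
  · -- left cancellation
    intro a b c hbc hne
    cases a <;> cases b <;> cases c <;> simp_all <;> split_ifs at hbc hne <;> simp_all
  · -- right cancellation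
    intro a b c hbc hne
    cases a <;> cases b <;> cases c <;> simp_all <;> split_ifs at hbc hne <;> simp_all
  · -- nil
    intro a
    refine ⟨2, by norm_num, ?_⟩
    show wmul (spow wmul a 0) a = W.z
    show wmul a a = W.z
    cases a <;> simp <;> omega
  · -- unique annihilator
    refine ⟨W.om, ⟨by simp, fun s => ⟨by simp, by simp⟩⟩, ?_⟩
    rintro w ⟨hw0, hw⟩
    cases w with
    | z => exact absurd rfl hw0
    | om => rfl
    | p a l =>
      have := (hw (W.p (a + l + 1) 0)).1
      simp at this
  · -- not subdirectly irreducible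
    rintro ⟨m, ⟨hm, hne⟩, hleast⟩
    by_cases hex : ∃ a b, m a b ∧ a ≠ b
    · obtain ⟨a, b, hab, hne'⟩ := hex
      -- congruence 1 : collapse {z, om}
      have hc1 : IsCongr wmul W.z (fun a b => a = b ∨
          ((a = W.z ∨ a = W.om) ∧ (b = W.z ∨ b = W.om))) := by
        apply congr_of_ideal
        · exact Or.inl rfl
        · rintro s t (rfl | rfl) <;> simp
      -- congruence 2 : collapse {z} ∪ {paths of length ≥ 2}
      set J2 : W → Prop := fun x => x = W.z ∨ ∃ a0 l, x = W.p a0 (l + 1) with hJ2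
      have hc2 : IsCongr wmul W.z (fun a b => a = b ∨ (J2 a ∧ J2 b)) := by
        apply congr_of_ideal
        · exact Or.inl rfl
        · rintro s t (rfl | ⟨a0, l, rfl⟩)
          · simp [hJ2]
          · constructor
            · cases t with
              | z => simp [hJ2]
              | om => simp [hJ2]
              | p c n =>
                simp only [wmul_p_p]
                split_ifs
                · exact Or.inr ⟨a0, l + n + 1, by ring_nf⟩
                · exact Or.inl rfl
            · cases t with
              | z => simp [hJ2]
              | om => simp [hJ2]
              | p c n =>
                simp only [wmul_p_p]
                split_ifs
                · exact Or.inr ⟨c, n + l + 1, by ring_nf⟩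
                · exact Or.inl rfl
      have hne1 : (fun a b => a = b ∨
          ((a = W.z ∨ a = W.om) ∧ (b = W.z ∨ b = W.om))) ≠ (fun a b : W => a = b) := by
        intro h
        have := congrFun (congrFun h W.z) W.om
        simp at this
      have hne2 : (fun a b => a = b ∨ (J2 a ∧ J2 b)) ≠ (fun a b : W => a = b) := by
        intro h
        have := congrFun (congrFun h W.z) (W.p 0 1)
        simp [hJ2] at this
      have h1 := hleast _ hc1 hne1 a b hab
      have h2 := hleast _ hc2 hne2 a b hab
      rcases h1 with rfl | ⟨ha1, hb1⟩
      · exact hne' rfl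
      rcases h2 with rfl | ⟨ha2, hb2⟩
      · exact hne' rfl
      have haz : a = W.z := by
        rcases ha1 with rfl | rfl
        · rfl
        · rcases ha2 with h | ⟨a0, l, h⟩ <;> simp_all
      have hbz : b = W.z := by
        rcases hb1 with rfl | rfl
        · rfl
        · rcases hb2 with h | ⟨a0, l, h⟩ <;> simp_all
      exact hne' (haz.trans hbz.symm)
    · apply hne
      funext a b
      apply propext
      constructor
      · intro h
        by_contra hab
        exact hex ⟨a, b, h, hab⟩
      · rintro rfl
        exact hm.1.refl a
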